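/- Let M be a conical refinement monoid. Then the set Fin(M) of all elements of M with finite index is an ideal of M (i.e., a submonoid that is a lower subset for the algebraic preordering). -/

import Mathlib

/-- The refinement property for a commutative monoid. -/
def HasRefinement (M : Type*) [AddCommMonoid M] : Prop :=
  ∀ a₀ a₁ b₀ b₁ : M, a₀ + a₁ = b₀ + b₁ →
    ∃ c₀₀ c₀₁ c₁₀ c₁₁ : M,
      a₀ = c₀₀ + c₀₁ ∧ a₁ = c₁₀ + c₁₁ ∧ b₀ = c₀₀ + c₁₀ ∧ b₁ = c₀₁ + c₁₁

/-- A commutative monoid is conical if `x + y = 0` implies `x = y = 0`. -/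
def Conical (M : Type*) [AddCommMonoid M] : Prop :=
  ∀ x y : M, x + y = 0 → x = 0 ∧ y = 0

/-- The algebraic preordering on a commutative monoid: `x ≤ y` iff `∃ z, x + z = y`. -/
def algLE {M : Type*} [AddCommMonoid M] (x y : M) : Prop := ∃ z, x + z = y

/-- The index of an element `x`: the supremum in `ℕ∞` of all `n` such that `n • y ≤ x`
for some nonzero `y`. -/
noncomputable def indexM {M : Type*} [AddCommMonoid M] (x : M) : ℕ∞ :=
  sSup ((fun n : ℕ => (n : ℕ∞)) '' {n : ℕ | ∃ y : M, y ≠ 0 ∧ algLE (n • y) x})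

section Aux

variable {M : Type*} [AddCommMonoid M]

lemma algLE_zero' (x : M) : algLE 0 x := ⟨x, zero_add x⟩

lemma algLE_trans' {a b c : M} (h1 : algLE a b) (h2 : algLE b c) : algLE a c := by
  obtain ⟨u, hu⟩ := h1; obtain ⟨v, hv⟩ := h2
  exact ⟨u + v, by rw [← add_assoc, hu, hv]⟩

lemma algLE_sum {a : M} {l : List M} (h : a ∈ l) : algLE a l.sum := by
  induction l with
  | nil => simp at h
  | cons b l ih =>
    rcases List.mem_cons.mp h with rfl | h
    · exact ⟨l.sum, by simp⟩
    · exact algLE_trans' (ih h) ⟨b, by rw [List.sum_cons]; exact add_comm _ _⟩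

/-- Refinement splitting of a weighted list along a decomposition of its total. -/
lemma split_lemma (hc : Conical M) (hr : HasRefinement M) (n : ℕ) :
    ∀ (l : List (M × ℕ)) (e f : M), (∀ p ∈ l, p.2 ≤ n) →
      (l.map Prod.fst).sum = e + f →
    ∃ l' : List (M × ℕ),
      (l'.map Prod.fst).sum = e + f ∧ (∀ p ∈ l', p.2 ≤ n + 1) ∧
      (l'.map (fun p => p.2 • p.1)).sum = (l.map (fun p => p.2 • p.1)).sum + e ∧
      (l'.map (fun p => (n + 1 - p.2) • p.1)).sum
        = (l.map (fun p => (n - p.2) • p.1)).sum + f := by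
  intro l
  induction l with
  | nil =>
    intro e f _ h
    simp only [List.map_nil, List.sum_nil] at h
    obtain ⟨he, hf⟩ := hc e f h.symm
    exact ⟨[], by simp [he, hf]⟩
  | cons p l ih =>
    rcases p with ⟨w, k⟩
    intro e f hw h
    simp only [List.map_cons, List.sum_cons] at h
    obtain ⟨c00, c01, c10, c11, hw', hS, he, hf⟩ := hr w (l.map Prod.fst).sum e f h
    have hk : k ≤ n := hw (w, k) List.mem_cons_self
    obtain ⟨l'', hS'', hw'', hA'', hB''⟩ :=
      ih c10 c11 (fun q hq => hw q (List.mem_cons_of_mem _ hq)) hS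
    refine ⟨(c00, k + 1) :: (c01, k) :: l'', ?_, ?_, ?_, ?_⟩
    · simp only [List.map_cons, List.sum_cons, hS'']
      rw [he, hf]; abel
    · intro q hq
      rcases List.mem_cons.mp hq with rfl | hq
      · omega
      rcases List.mem_cons.mp hq with rfl | hq
      · omega
      · exact hw'' q hq
    · simp only [List.map_cons, List.sum_cons, hA'']
      rw [hw', he, succ_nsmul, smul_add]
      abel
    · have h1 : n + 1 - (k + 1) = n - k := by omega
      have h2 : n + 1 - k = (n - k) + 1 := by omega
      simp only [List.map_cons, List.sum_cons, hB'', h1, h2]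
      rw [hw', hf, succ_nsmul, smul_add]
      abel

/-- Main decomposition lemma: if `n • c ≤ x + y`, then `c` decomposes as a weighted
list with weighted sums below `x` and `y`. -/
lemma main_lemma (hc : Conical M) (hr : HasRefinement M) :
    ∀ (n : ℕ) (c x y : M), algLE (n • c) (x + y) →
    ∃ l : List (M × ℕ), (l.map Prod.fst).sum = c ∧ (∀ p ∈ l, p.2 ≤ n) ∧
      algLE ((l.map (fun p => p.2 • p.1)).sum) x ∧
      algLE ((l.map (fun p => (n - p.2) • p.1)).sum) y := by
  intro n
  induction n with
  | zero =>
    intro c x y _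
    exact ⟨[(c, 0)], by simp, by simp, by simpa using algLE_zero' x,
      by simpa using algLE_zero' y⟩
  | succ n ih =>
    rintro c x y ⟨z, hz⟩
    have h1 : c + (n • c + z) = x + y := by
      rw [succ_nsmul] at hz; rw [← hz]; abel
    obtain ⟨e, f, u, v, hce, hsum, hx, hy⟩ := hr c (n • c + z) x y h1
    obtain ⟨l, hlc, hlw, ⟨a, hA⟩, ⟨b, hB⟩⟩ := ih c u v ⟨z, hsum⟩
    obtain ⟨l', hS', hw', hA', hB'⟩ :=
      split_lemma hc hr n l e f hlw (by rw [hlc, hce])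
    refine ⟨l', by rw [hS', ← hce], hw', ⟨a, ?_⟩, ⟨b, ?_⟩⟩
    · rw [hA', hx, ← hA]; abel
    · rw [hB', hy, ← hB]; abel

lemma index_bound {x : M} (h : indexM x < ⊤) :
    ∃ N : ℕ, ∀ n : ℕ, (∃ y : M, y ≠ 0 ∧ algLE (n • y) x) → n ≤ N := by
  obtain ⟨N, hN⟩ := WithTop.ne_top_iff_exists.mp h.ne
  refine ⟨N, fun n hn => ?_⟩
  have h1 : (n : ℕ∞) ≤ indexM x := le_sSup (Set.mem_image_of_mem _ hn)
  rw [← hN] at h1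
  exact Nat.cast_le.mp h1

end Aux

theorem stmt8 {M : Type*} [AddCommMonoid M]
    (hc : Conical M) (hr : HasRefinement M) :
    (0 : M) ∈ {x : M | indexM x < ⊤} ∧
      (∀ x y : M, x ∈ {x : M | indexM x < ⊤} → y ∈ {x : M | indexM x < ⊤} →
        x + y ∈ {x : M | indexM x < ⊤}) ∧
      (∀ x ∈ {x : M | indexM x < ⊤}, ∀ p : M, algLE p x → p ∈ {x : M | indexM x < ⊤}) := by
  refine ⟨?_, ?_, ?_⟩
  · -- indexM 0 < ⊤
    have hle : indexM (0 : M) ≤ (0 : ℕ∞) := by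
      apply sSup_le
      rintro a ⟨n, ⟨y, hy, ⟨z, hz⟩⟩, rfl⟩
      have hny : n • y = 0 := (hc _ _ hz).1
      rcases n with _ | m
      · simp
      · exfalso
        rw [succ_nsmul] at hny
        exact hy (hc _ _ hny).2
    exact lt_of_le_of_lt hle (by simp)
  · -- closed under addition
    intro x y hx hy
    obtain ⟨Nx, hNx⟩ := index_bound hx
    obtain ⟨Ny, hNy⟩ := index_bound hy
    have hle : indexM (x + y) ≤ ((Nx + Ny : ℕ) : ℕ∞) := by
      apply sSup_le
      rintro a ⟨n, ⟨c, hcne, hle⟩, rfl⟩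
      obtain ⟨l, hlc, hlw, hA, hB⟩ := main_lemma hc hr n c x y hle
      have hex : ∃ p ∈ l, p.1 ≠ 0 := by
        by_contra hcon
        push_neg at hcon
        apply hcne
        rw [← hlc]
        apply List.sum_eq_zero
        intro a ha
        obtain ⟨p, hp, rfl⟩ := List.mem_map.mp ha
        exact hcon p hp
      obtain ⟨p, hp, hpne⟩ := hex
      have h1 : algLE (p.2 • p.1) x :=
        algLE_trans' (algLE_sum (List.mem_map_of_mem (f := fun (q : M × ℕ) => q.2 • q.1) hp)) hA
      have h2 : algLE ((n - p.2) • p.1) y :=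
        algLE_trans' (algLE_sum (List.mem_map_of_mem (f := fun (q : M × ℕ) => (n - q.2) • q.1) hp)) hB
      have hk1 : p.2 ≤ Nx := hNx _ ⟨p.1, hpne, h1⟩
      have hk2 : n - p.2 ≤ Ny := hNy _ ⟨p.1, hpne, h2⟩
      have hkn : p.2 ≤ n := hlw p hp
      have hn : n ≤ Nx + Ny := by omega
      show ((n : ℕ) : ℕ∞) ≤ ((Nx + Ny : ℕ) : ℕ∞)
      exact Nat.cast_le.mpr hn
    exact lt_of_le_of_lt hle (WithTop.coe_lt_top _)
  · -- downward closed
    intro x hx p hpx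
    have hle : indexM p ≤ indexM x := by
      apply sSup_le_sSup
      apply Set.image_mono
      rintro n ⟨y, hy, hle⟩
      exact ⟨y, hy, algLE_trans' hle hpx⟩
    exact lt_of_le_of_lt hle hx
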